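/- For all vectors a, b ∈ ℝ^n with |a|² > σ² and |b|² > σ², and real p > 2: ⟨(|b|²−σ²)^(p/2−1) b − (|a|²−σ²)^(p/2−1) a, b − a⟩ ≥ (1/2)·((|b|²−σ²)^(p/2−1) + (|a|²−σ²)^(p/2−1))·|a−b|². -/

import Mathlib

open RealInnerProductSpace

/- Expanding both sides, the difference between the two sides of the inequality is
`(α - β) (‖b‖² - ‖a‖²) / 2`; with `α = (‖b‖² - σ²)^e`, `β = (‖a‖² - σ²)^e` and
`e = p/2 - 1 ≥ 0` this is `(t ↦ t^e)(B) - (t ↦ t^e)(A)` times `B - A`, which is nonnegative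
since `t ↦ t^e` is monotone on `[0, ∞)`. -/

theorem MonotoneOn.sub_mul_sub_nonneg {f : ℝ → ℝ} {s : Set ℝ} (hf : MonotoneOn f s)
    {x y : ℝ} (hx : x ∈ s) (hy : y ∈ s) : 0 ≤ (f y - f x) * (y - x) := by
  rcases le_total x y with hxy | hyx
  · exact mul_nonneg (sub_nonneg.2 (hf hx hy hxy)) (sub_nonneg.2 hxy)
  · exact mul_nonneg_of_nonpos_of_nonpos (sub_nonpos.2 (hf hy hx hyx)) (sub_nonpos.2 hyx)

section InnerProductSpace

variable {E : Type*} [NormedAddCommGroup E] [InnerProductSpace ℝ E]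

theorem inner_smul_sub_smul_sub_sub_half_mul_norm_sq (α β : ℝ) (a b : E) :
    ⟪α • b - β • a, b - a⟫ - 1 / 2 * (α + β) * ‖a - b‖ ^ 2 =
      (α - β) * (‖b‖ ^ 2 - ‖a‖ ^ 2) / 2 := by
  rw [norm_sub_sq_real]
  simp only [inner_sub_left, inner_sub_right, real_inner_smul_left,
    real_inner_self_eq_norm_sq, real_inner_comm a b]
  ring

theorem half_mul_norm_sub_sq_le_inner_smul_sub_smul {α β : ℝ} {a b : E}
    (h : 0 ≤ (α - β) * (‖b‖ ^ 2 - ‖a‖ ^ 2)) :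
    1 / 2 * (α + β) * ‖a - b‖ ^ 2 ≤ ⟪α • b - β • a, b - a⟫ := by
  have := inner_smul_sub_smul_sub_sub_half_mul_norm_sq α β a b
  linarith

end InnerProductSpace

theorem stmt_11_general (n : ℕ) (p σ : ℝ) (hp : 2 < p)
    (a b : EuclideanSpace ℝ (Fin n)) (ha : σ ^ 2 < ‖a‖ ^ 2) (hb : σ ^ 2 < ‖b‖ ^ 2) :
    ⟪(‖b‖ ^ 2 - σ ^ 2) ^ (p / 2 - 1) • b - (‖a‖ ^ 2 - σ ^ 2) ^ (p / 2 - 1) • a, b - a⟫ ≥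
      (1 / 2) * ((‖b‖ ^ 2 - σ ^ 2) ^ (p / 2 - 1) + (‖a‖ ^ 2 - σ ^ 2) ^ (p / 2 - 1)) *
        ‖a - b‖ ^ 2 := by
  have hmono := Real.monotoneOn_rpow_Ici_of_exponent_nonneg (r := p / 2 - 1) (by linarith)
  have key := hmono.sub_mul_sub_nonneg (x := ‖a‖ ^ 2 - σ ^ 2) (y := ‖b‖ ^ 2 - σ ^ 2)
    (Set.mem_Ici.2 (by linarith)) (Set.mem_Ici.2 (by linarith))
  rw [sub_sub_sub_cancel_right] at key
  exact half_mul_norm_sub_sq_le_inner_smul_sub_smul key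

theorem stmt_11 (n : ℕ) (p σ : ℝ) (hp : 2 < p) (hσ : 0 < σ)
    (a b : EuclideanSpace ℝ (Fin n)) (ha : σ ^ 2 < ‖a‖ ^ 2) (hb : σ ^ 2 < ‖b‖ ^ 2) :
    ⟪(‖b‖ ^ 2 - σ ^ 2) ^ (p / 2 - 1) • b - (‖a‖ ^ 2 - σ ^ 2) ^ (p / 2 - 1) • a, b - a⟫ ≥
      (1 / 2) * ((‖b‖ ^ 2 - σ ^ 2) ^ (p / 2 - 1) + (‖a‖ ^ 2 - σ ^ 2) ^ (p / 2 - 1)) *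
        ‖a - b‖ ^ 2 :=
  stmt_11_general n p σ hp a b ha hb
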